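/- arXiv:2111.11678 — 3 statements merged into one kernel-verified Lean document; each statement's English description precedes it below -/
import Mathlib

section
/- Fix an integer d ≥ 1 and let β > 1/2. There exists a constant C > 0 depending only on β such that for every s ∈ [0, 1] and all a, b ∈ Ê, Σ_{b′∈Ê} (a/b′)^s / ((1 + ln b′)^{2β} (1 + |a − b′|)) ≤ C; that is, the sum over b′ ∈ Ê of (a/b′)^s divided by (1+ln b′)^{2β}(1+|a−b′|) is bounded uniformly in a ∈ Ê and s ∈ [0,1]. -/
open Real

noncomputable def Wfun (d : ℕ) (p : ℝ) (j : ℕ) : ℝ :=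
  ((1 + 2 * (j : ℝ)) * (1 + Real.log ((d : ℝ) + 2 * j)) ^ p)⁻¹

lemma base_ge_one (d : ℕ) (hd : 1 ≤ d) (k : ℕ) : (1 : ℝ) ≤ (d : ℝ) + 2 * k := by
  have h1 : (1 : ℝ) ≤ (d : ℝ) := by exact_mod_cast hd
  have h2 : (0 : ℝ) ≤ (k : ℝ) := Nat.cast_nonneg k
  linarith

lemma logfac_ge_one (d : ℕ) (hd : 1 ≤ d) (p : ℝ) (hp : 0 ≤ p) (k : ℕ) :
    (1 : ℝ) ≤ (1 + Real.log ((d : ℝ) + 2 * k)) ^ p := by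
  have h1 := base_ge_one d hd k
  have hlog : 0 ≤ Real.log ((d : ℝ) + 2 * k) := Real.log_nonneg h1
  exact Real.one_le_rpow (by linarith) hp

lemma Wfun_pos (d : ℕ) (hd : 1 ≤ d) (p : ℝ) (hp : 0 ≤ p) (j : ℕ) : 0 < Wfun d p j := by
  have := logfac_ge_one d hd p hp j
  have h2 : (0:ℝ) < 1 + 2 * (j:ℝ) := by positivity
  exact inv_pos.mpr (by nlinarith)

lemma Wfun_anti (d : ℕ) (hd : 1 ≤ d) (p : ℝ) (hp : 0 ≤ p) {a b : ℕ} (hab : a ≤ b) :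
    Wfun d p b ≤ Wfun d p a := by
  have hcast : (a : ℝ) ≤ (b : ℝ) := Nat.cast_le.mpr hab
  have h1a := base_ge_one d hd a
  have h1b := base_ge_one d hd b
  have hlog : Real.log ((d : ℝ) + 2 * a) ≤ Real.log ((d : ℝ) + 2 * b) :=
    Real.log_le_log (by linarith) (by linarith)
  have hloga : 0 ≤ Real.log ((d : ℝ) + 2 * a) := Real.log_nonneg h1a
  have hr : (1 + Real.log ((d : ℝ) + 2 * a)) ^ p ≤ (1 + Real.log ((d : ℝ) + 2 * b)) ^ p :=
    Real.rpow_le_rpow (by linarith) (by linarith) hp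
  have hA := logfac_ge_one d hd p hp a
  have ha0 : (0:ℝ) ≤ (a:ℝ) := Nat.cast_nonneg a
  apply inv_anti₀ (by nlinarith)
  nlinarith

lemma Wfun_summable (d : ℕ) (hd : 1 ≤ d) (p : ℝ) (hp : 1 < p) :
    Summable (Wfun d p) := by
  have hp0 : (0:ℝ) ≤ p := by linarith
  rw [← summable_condensed_iff_of_nonneg (fun n => (Wfun_pos d hd p hp0 n).le)
    (fun m n _ hmn => Wfun_anti d hd p hp0 hmn)]
  rw [← summable_nat_add_iff 1]
  have hsum : Summable (fun n : ℕ => (Real.log 2 ^ p)⁻¹ * (((n:ℝ) + 1) ^ p)⁻¹) := by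
    apply Summable.mul_left
    exact_mod_cast (summable_nat_add_iff 1).mpr (Real.summable_nat_rpow_inv.mpr hp)
  apply Summable.of_nonneg_of_le _ _ hsum
  · intro n
    have := (Wfun_pos d hd p hp0 (2 ^ (n+1))).le
    positivity
  · intro n
    have hlog2 : (0:ℝ) < Real.log 2 := Real.log_pos one_lt_two
    have hn1 : (0:ℝ) < (n:ℝ) + 1 := by positivity
    set N : ℝ := ((2 ^ (n+1) : ℕ) : ℝ) with hNdef
    have hN : N = (2:ℝ) ^ (n+1) := by rw [hNdef]; push_cast; ring
    have hNpos : (0:ℝ) < N := by rw [hN]; positivity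
    have hd0 : (0:ℝ) ≤ (d:ℝ) := Nat.cast_nonneg d
    have hbig : N ≤ (d : ℝ) + 2 * N := by linarith
    set L : ℝ := 1 + Real.log ((d : ℝ) + 2 * N) with hLdef
    have hkey : ((n:ℝ)+1) * Real.log 2 ≤ L := by
      have h2 : Real.log N ≤ Real.log ((d : ℝ) + 2 * N) := Real.log_le_log hNpos hbig
      have h3 : Real.log N = (n+1 : ℕ) * Real.log 2 := by
        rw [hN, ← Real.log_pow]
      rw [h3] at h2
      push_cast at h2
      simp only [hLdef]
      linarith
    have hrp : (((n:ℝ)+1) * Real.log 2) ^ p ≤ L ^ p :=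
      Real.rpow_le_rpow (by positivity) hkey hp0
    rw [Real.mul_rpow hn1.le hlog2.le] at hrp
    have hL1 : (1:ℝ) ≤ L ^ p := logfac_ge_one d hd p hp0 (2 ^ (n+1))
    have hppos1 : (0:ℝ) < ((n:ℝ)+1) ^ p := Real.rpow_pos_of_pos hn1 p
    have hppos2 : (0:ℝ) < Real.log 2 ^ p := Real.rpow_pos_of_pos hlog2 p
    have hden : N * (((n:ℝ)+1) ^ p * Real.log 2 ^ p) ≤ (1 + 2 * N) * L ^ p := by
      nlinarith
    show (2:ℝ) ^ (n+1) * Wfun d p (2 ^ (n+1)) ≤ _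
    have hWeq : Wfun d p (2 ^ (n+1)) = ((1 + 2 * N) * L ^ p)⁻¹ := rfl
    rw [hWeq]
    calc (2:ℝ) ^ (n+1) * ((1 + 2 * N) * L ^ p)⁻¹
        ≤ (2:ℝ) ^ (n+1) * (N * (((n:ℝ)+1) ^ p * Real.log 2 ^ p))⁻¹ := by
          apply mul_le_mul_of_nonneg_left _ (by positivity)
          exact inv_anti₀ (by positivity) hden
      _ = (Real.log 2 ^ p)⁻¹ * ((((n:ℕ):ℝ) + 1) ^ p)⁻¹ := by
          rw [hN]
          field_simp

lemma key_bound (d : ℕ) (hd : 1 ≤ d) (p : ℝ) (hp : 0 ≤ p) {s : ℝ} (hs0 : 0 ≤ s) (hs1 : s ≤ 1)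
    (m k : ℕ) :
    (((d:ℝ) + 2*m) / ((d:ℝ) + 2*k)) ^ s /
      ((1 + Real.log ((d:ℝ) + 2*k)) ^ p * (1 + |((d:ℝ) + 2*m) - ((d:ℝ) + 2*k)|)) ≤
    2 * Wfun d p k + Wfun d p (Nat.dist m k) := by
  set A : ℝ := (d:ℝ) + 2*m with hAdef
  set B : ℝ := (d:ℝ) + 2*k with hBdef
  set L : ℝ := (1 + Real.log ((d:ℝ) + 2*k)) ^ p with hLdef
  have hA1 : (1:ℝ) ≤ A := base_ge_one d hd m
  have hB1 : (1:ℝ) ≤ B := base_ge_one d hd k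
  have hL1 : (1:ℝ) ≤ L := logfac_ge_one d hd p hp k
  have hWk := Wfun_pos d hd p hp k
  have hWkB : Wfun d p k = ((1 + 2*(k:ℝ)) * L)⁻¹ := rfl
  have h2k : 1 + 2*(k:ℝ) ≤ B := by
    have : (1:ℝ) ≤ (d:ℝ) := by exact_mod_cast hd
    rw [hBdef]; linarith
  rcases le_or_gt m k with hmk | hkm
  · -- case m ≤ k
    set j : ℕ := k - m with hjdef
    have hdist : Nat.dist m k = j := Nat.dist_eq_sub_of_le hmk
    have hjr : ((j:ℕ):ℝ) = (k:ℝ) - m := by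
      rw [hjdef, Nat.cast_sub hmk]
    have hWj := Wfun_pos d hd p hp j
    have hAB : A ≤ B := by
      have : (m:ℝ) ≤ (k:ℝ) := Nat.cast_le.mpr hmk
      rw [hAdef, hBdef]; linarith
    have habs : |A - B| = 2 * ((j:ℕ):ℝ) := by
      rw [abs_sub_comm, abs_of_nonneg (by linarith), hjr]; ring
    have hnum : (A/B)^s ≤ 1 :=
      Real.rpow_le_one (by positivity) ((div_le_one (by linarith)).mpr hAB) hs0
    have hLj : (1 + Real.log ((d:ℝ) + 2*(j:ℝ))) ^ p ≤ L := by
      rw [hLdef]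
      apply Real.rpow_le_rpow
      · have := base_ge_one d hd j
        have := Real.log_nonneg (base_ge_one d hd j)
        linarith
      · have hjk : ((j:ℕ):ℝ) ≤ (k:ℝ) := by
          rw [hjr]; have : (0:ℝ) ≤ (m:ℝ) := Nat.cast_nonneg m; linarith
        have h1j := base_ge_one d hd j
        have := Real.log_le_log (by linarith) (show (d:ℝ) + 2*(j:ℝ) ≤ (d:ℝ) + 2*(k:ℝ) by linarith)
        linarith
      · exact hp
    have hLj1 := logfac_ge_one d hd p hp j
    have hZ : (Wfun d p j)⁻¹ ≤ L * (1 + |A - B|) := by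
      rw [habs, Wfun, inv_inv]
      have hj0 : (0:ℝ) ≤ (j:ℝ) := Nat.cast_nonneg j
      calc (1 + 2*(j:ℝ)) * (1 + Real.log ((d:ℝ) + 2*(j:ℝ))) ^ p
          ≤ (1 + 2*(j:ℝ)) * L := mul_le_mul_of_nonneg_left hLj (by positivity)
        _ = L * (1 + 2*(j:ℝ)) := mul_comm _ _
    have hT : (A/B)^s / (L * (1 + |A - B|)) ≤ 1 / (Wfun d p j)⁻¹ :=
      div_le_div₀ zero_le_one hnum (by positivity) hZ
    rw [one_div, inv_inv] at hT
    rw [hdist]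
    linarith
  · -- case k < m
    set j : ℕ := m - k with hjdef
    have hdist : Nat.dist m k = j := Nat.dist_eq_sub_of_le_right hkm.le
    have hjr : ((j:ℕ):ℝ) = (m:ℝ) - k := by
      rw [hjdef, Nat.cast_sub hkm.le]
    have hWj := Wfun_pos d hd p hp j
    have hjr1 : (1:ℝ) ≤ ((j:ℕ):ℝ) := by
      have : 1 ≤ j := by omega
      exact_mod_cast this
    have hAeq : A = B + 2 * ((j:ℕ):ℝ) := by rw [hAdef, hBdef, hjr]; ring
    have habs : |A - B| = 2 * ((j:ℕ):ℝ) := by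
      rw [abs_of_nonneg (by linarith)]; linarith
    have hBA : 1 ≤ A / B := (one_le_div (by linarith)).mpr (by linarith)
    have hnum : (A/B)^s ≤ A/B := by
      calc (A/B)^s ≤ (A/B)^(1:ℝ) := Real.rpow_le_rpow_of_exponent_le hBA hs1
        _ = A/B := Real.rpow_one _
    set jr : ℝ := ((j:ℕ):ℝ)
    have hden_pos : (0:ℝ) < L * (1 + 2*jr) := by positivity
    have hT1 : (A/B)^s / (L * (1 + |A - B|)) ≤ (A/B) / (L * (1 + 2*jr)) := by
      rw [habs]
      exact (div_le_div_iff_of_pos_right hden_pos).mpr hnum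
    have hLB : (0:ℝ) < L * B := by positivity
    have halg : (A/B) / (L * (1 + 2*jr)) ≤ 1 / (L * (1 + 2*jr)) + 1 / (L * B) := by
      rw [div_div]
      have heq : A / (B * (L * (1 + 2*jr))) =
          1 / (L * (1+2*jr)) + (2*jr) / (B * (L * (1+2*jr))) := by
        rw [hAeq]; field_simp; try ring
      rw [heq]
      have h2 : (2*jr) / (B * (L * (1+2*jr))) ≤ 1 / (L*B) := by
        rw [div_le_div_iff₀ (by positivity) hLB]
        nlinarith
      linarith
    have hterm2 : 1 / (L * B) ≤ Wfun d p k := by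
      rw [hWkB, one_div]
      apply inv_anti₀ (by positivity)
      rw [mul_comm]
      exact mul_le_mul_of_nonneg_left h2k (by linarith)
    have hterm1 : 1 / (L * (1 + 2*jr)) ≤ Wfun d p k + Wfun d p j := by
      rcases le_or_gt j k with hjk | hkj
      · have hjk' : (jr:ℝ) ≤ (k:ℝ) := Nat.cast_le.mpr hjk
        have h1j := base_ge_one d hd j
        have hlogj := Real.log_nonneg h1j
        have hLj : (1 + Real.log ((d:ℝ) + 2*jr)) ^ p ≤ L := by
          rw [hLdef]
          apply Real.rpow_le_rpow (by linarith)
          · have := Real.log_le_log (by linarith : (0:ℝ) < (d:ℝ) + 2*jr)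
              (show (d:ℝ) + 2*jr ≤ (d:ℝ) + 2*(k:ℝ) by linarith)
            linarith
          · exact hp
        have hLj1 := logfac_ge_one d hd p hp j
        have hZ : (Wfun d p j)⁻¹ ≤ L * (1 + 2*jr) := by
          rw [Wfun, inv_inv]
          calc (1 + 2*jr) * (1 + Real.log ((d:ℝ) + 2*jr)) ^ p
              ≤ (1 + 2*jr) * L := mul_le_mul_of_nonneg_left hLj (by positivity)
            _ = L * (1 + 2*jr) := mul_comm _ _
        have h3 := inv_anti₀ (inv_pos.mpr hWj) hZ
        rw [inv_inv] at h3
        rw [one_div]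
        linarith
      · have hkj' : (k:ℝ) ≤ jr := Nat.cast_le.mpr hkj.le
        have hZ : (Wfun d p k)⁻¹ ≤ L * (1 + 2*jr) := by
          rw [hWkB, inv_inv]
          calc (1 + 2*(k:ℝ)) * L = L * (1 + 2*(k:ℝ)) := mul_comm _ _
            _ ≤ L * (1 + 2*jr) := mul_le_mul_of_nonneg_left (by linarith) (by linarith)
        have h3 := inv_anti₀ (inv_pos.mpr hWk) hZ
        rw [inv_inv] at h3
        rw [one_div]
        linarith
    rw [hdist]
    linarith


theorem stmt11 (d : ℕ) (hd : 1 ≤ d) (β : ℝ) (hβ : 1 / 2 < β) :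
    ∃ C > 0, ∀ s ∈ Set.Icc (0 : ℝ) 1, ∀ ka : ℕ,
      Summable (fun k : ℕ =>
        (((d : ℝ) + 2 * ka) / ((d : ℝ) + 2 * k)) ^ s /
          ((1 + Real.log ((d : ℝ) + 2 * k)) ^ (2 * β) *
            (1 + |((d : ℝ) + 2 * ka) - ((d : ℝ) + 2 * k)|))) ∧
      ∑' k : ℕ, (((d : ℝ) + 2 * ka) / ((d : ℝ) + 2 * k)) ^ s /
          ((1 + Real.log ((d : ℝ) + 2 * k)) ^ (2 * β) *
            (1 + |((d : ℝ) + 2 * ka) - ((d : ℝ) + 2 * k)|)) ≤ C := by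
  set p : ℝ := 2 * β with hpdef
  have hp1 : 1 < p := by rw [hpdef]; linarith
  have hp0 : (0:ℝ) ≤ p := by linarith
  have Sw : Summable (Wfun d p) := Wfun_summable d hd p hp1
  set S : ℝ := ∑' j, Wfun d p j with hSdef
  have hS0 : 0 ≤ S := tsum_nonneg (fun j => (Wfun_pos d hd p hp0 j).le)
  refine ⟨4 * S + 1, by linarith, ?_⟩
  rintro s ⟨hs0, hs1⟩ ka
  set T : ℕ → ℝ := fun k =>
    (((d : ℝ) + 2 * ka) / ((d : ℝ) + 2 * k)) ^ s /
      ((1 + Real.log ((d : ℝ) + 2 * k)) ^ p *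
        (1 + |((d : ℝ) + 2 * ka) - ((d : ℝ) + 2 * k)|)) with hTdef
  have hkey : ∀ k, T k ≤ 2 * Wfun d p k + Wfun d p (Nat.dist ka k) :=
    fun k => key_bound d hd p hp0 hs0 hs1 ka k
  have hT0 : ∀ k, 0 ≤ T k := by
    intro k
    apply div_nonneg (Real.rpow_nonneg (by positivity) s)
    have h1 := logfac_ge_one d hd p hp0 k
    have h2 : (0:ℝ) ≤ |((d : ℝ) + 2 * ka) - ((d : ℝ) + 2 * k)| := abs_nonneg _
    nlinarith
  have hWdist_le : ∀ k, Wfun d p (Nat.dist ka k) ≤ Wfun d p (k - ka) := by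
    intro k
    rcases le_total ka k with h | h
    · rw [Nat.dist_eq_sub_of_le h]
    · have h0 : k - ka = 0 := by omega
      rw [h0]
      exact Wfun_anti d hd p hp0 (Nat.zero_le _)
  have hsub : Summable (fun k => Wfun d p (k - ka)) := by
    refine (summable_nat_add_iff ka).mp ?_
    simpa using Sw
  have hdistS : Summable (fun k => Wfun d p (Nat.dist ka k)) :=
    Summable.of_nonneg_of_le (fun k => (Wfun_pos d hd p hp0 _).le) hWdist_le hsub
  have hg : Summable (fun k => 2 * Wfun d p k + Wfun d p (Nat.dist ka k)) :=
    (Sw.mul_left 2).add hdistS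
  have hTs : Summable T := Summable.of_nonneg_of_le hT0 hkey hg
  refine ⟨hTs, ?_⟩
  have htsum_dist : ∑' k, Wfun d p (Nat.dist ka k) ≤ 2 * S := by
    rw [← Summable.sum_add_tsum_nat_add ka hdistS]
    have h2 : ∑' (i : ℕ), Wfun d p (Nat.dist ka (i + ka)) = S := by
      rw [hSdef]
      apply tsum_congr
      intro i
      congr 1
      rw [Nat.dist_eq_sub_of_le (Nat.le_add_left _ _)]
      omega
    have h1 : ∑ i ∈ Finset.range ka, Wfun d p (Nat.dist ka i) ≤ S := by
      have hcalc : ∑ i ∈ Finset.range ka, Wfun d p (Nat.dist ka i)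
          = ∑ j ∈ Finset.range ka, Wfun d p (j + 1) := by
        rw [← Finset.sum_range_reflect]
        apply Finset.sum_congr rfl
        intro j hj
        have hj' : j < ka := Finset.mem_range.mp hj
        congr 1
        rw [Nat.dist_eq_sub_of_le_right (by omega)]
        omega
      rw [hcalc]
      have hshift : Summable (fun j : ℕ => Wfun d p (j + 1)) :=
        (summable_nat_add_iff 1).mpr Sw
      have hle : ∑ j ∈ Finset.range ka, Wfun d p (j + 1) ≤ ∑' j : ℕ, Wfun d p (j + 1) :=
        Summable.sum_le_tsum _ (fun j _ => (Wfun_pos d hd p hp0 _).le) hshift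
      have heq : ∑ i ∈ Finset.range 1, Wfun d p i + ∑' (i : ℕ), Wfun d p (i + 1) = S :=
        Summable.sum_add_tsum_nat_add 1 Sw
      have hW0 : 0 ≤ Wfun d p 0 := (Wfun_pos d hd p hp0 0).le
      rw [Finset.sum_range_one] at heq
      linarith
    linarith [h1, le_of_eq h2]
  calc ∑' k, T k ≤ ∑' k, (2 * Wfun d p k + Wfun d p (Nat.dist ka k)) :=
        Summable.tsum_le_tsum hkey hTs hg
    _ = 2 * S + ∑' k, Wfun d p (Nat.dist ka k) := by
        rw [Summable.tsum_add (Sw.mul_left 2) hdistS, tsum_mul_left]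
    _ ≤ 4 * S + 1 := by linarith
end

section
/- Fix an integer d ≥ 1 and let β > 1/2. There exists a constant C > 0 depending only on β such that for every s ∈ [−1, 0) and every b ∈ Ê, Σ_{a∈Ê} (a/b)^s / ((1 + ln a)^{2β} (1 + |a − b|)) ≤ C; that is, the sum over a ∈ Ê of (a/b)^s divided by (1+ln a)^{2β}(1+|a−b|) is bounded uniformly in b ∈ Ê and s ∈ [−1,0). -/
/-!
Write `a = d + 2k`, `b = d + 2kb` and `L x = (1 + log x) ^ (2β)`. For `s ∈ [-1, 0]` we have
`(a / b) ^ s ≤ (a + |a - b|) / a`, which splits each term into `1 / (a L a)` and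
`1 / (L a (1 + |a - b|))`. Unless `b / 2 ≤ a < 2b`, the second piece is at most `2 / (a L a)`
as well, and `∑ 1 / (a L a)` is a convergent Bertrand series because `2β > 1`. On the window
`b / 2 ≤ a < 2b` we have `L b ≤ 4 ^ β L a`, so those terms add up to at most
`4 ^ β (L b)⁻¹ ∑_{k < b} 1 / (1 + |k - kb|) ≤ 4 ^ β · 2 (1 + log b) / L b ≤ 2 · 4 ^ β`.
-/

open Real Finset

lemma summable_and_tsum_le_of_le_add_ite {ι : Type*} [DecidableEq ι] {f g h : ι → ℝ}
    {s : Finset ι} (hf : ∀ i, 0 ≤ f i) (hg : Summable g)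
    (hfgh : ∀ i, f i ≤ g i + if i ∈ s then h i else 0) :
    Summable f ∧ ∑' i, f i ≤ ∑' i, g i + ∑ i ∈ s, h i := by
  have hs : Summable fun i => if i ∈ s then h i else 0 :=
    summable_of_ne_finset_zero fun i hi => if_neg hi
  have hf' : Summable f := (hg.add hs).of_nonneg_of_le hf hfgh
  refine ⟨hf', (hf'.tsum_le_tsum hfgh (hg.add hs)).trans_eq ?_⟩
  rw [hg.tsum_add hs, tsum_eq_sum fun i hi => if_neg hi, sum_ite_mem, inter_self]

lemma inv_mul_one_add_log_rpow_anti {x y p : ℝ} (hx : 1 ≤ x) (hxy : x ≤ y) (hp : 0 ≤ p) :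
    (y * (1 + log y) ^ p)⁻¹ ≤ (x * (1 + log x) ^ p)⁻¹ := by
  have := log_nonneg hx
  gcongr; linarith

lemma summable_inv_nat_mul_one_add_log_rpow {p : ℝ} (hp : 1 < p) :
    Summable fun n : ℕ => ((n : ℝ) * (1 + log n) ^ p)⁻¹ := by
  have hlog2 : 0 < log 2 := log_pos one_lt_two
  rw [← summable_condensed_iff_of_nonneg (fun n => by have := log_natCast_nonneg n; positivity)
    (fun m n hm hmn => inv_mul_one_add_log_rpow_anti (by exact_mod_cast hm) (by exact_mod_cast hmn)
      (by linarith))]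
  have hcond (k : ℕ) :
      (2 : ℝ) ^ k * (((2 ^ k : ℕ) : ℝ) * (1 + log (2 ^ k : ℕ)) ^ p)⁻¹ =
        ((1 + k * log 2) ^ p)⁻¹ := by
    push_cast
    rw [log_pow, mul_inv, ← mul_assoc, mul_inv_cancel₀ (by positivity), one_mul]
  simp_rw [hcond]
  -- `log 2 < 1` gives `1 + k log 2 ≥ (k + 1) log 2`
  have hle (k : ℕ) :
      ((1 + k * log 2) ^ p)⁻¹ ≤ (log 2 ^ p)⁻¹ * (((k + 1 : ℕ) : ℝ) ^ p)⁻¹ := by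
    rw [← mul_inv, ← mul_rpow hlog2.le (by positivity)]
    have := log_two_lt_d9
    gcongr
    push_cast
    nlinarith
  refine .of_nonneg_of_le (fun k => by positivity) hle (.mul_left _ ?_)
  exact (summable_nat_add_iff 1).mpr (summable_nat_rpow_inv.mpr hp)

lemma summable_inv_mul_one_add_log_rpow_of_le {a : ℕ → ℝ}
    (ha : ∀ k : ℕ, (k : ℝ) + 1 ≤ a k) {p : ℝ} (hp : 1 < p) :
    Summable fun k => (a k * (1 + log (a k)) ^ p)⁻¹ := by
  have hbertrand := (summable_nat_add_iff 1).mpr (summable_inv_nat_mul_one_add_log_rpow hp)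
  refine .of_nonneg_of_le (fun k => ?_) (fun k => ?_) hbertrand
  · have h1 : 1 ≤ a k := by linarith [ha k, k.cast_nonneg (α := ℝ)]
    exact inv_nonneg.mpr (mul_nonneg (by linarith) (rpow_nonneg (by linarith [log_nonneg h1]) _))
  · exact_mod_cast inv_mul_one_add_log_rpow_anti (by linarith) (ha k) (by linarith)

lemma sum_range_inv_one_add_abs_sub_le {m n : ℕ} (hmn : m < n) :
    ∑ k ∈ range n, (1 + |(k : ℝ) - m|)⁻¹ ≤ 2 * (1 + log n) := by
  have hH {l : ℕ} (hl : l ≤ n) : ∑ j ∈ range l, ((j : ℝ) + 1)⁻¹ ≤ 1 + log n := by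
    refine (sum_le_sum_of_subset_of_nonneg (range_subset_range.mpr hl)
      fun _ _ _ => by positivity).trans ?_
    simpa [harmonic] using harmonic_le_one_add_log n
  rw [← sum_range_add_sum_Ico _ hmn.le, two_mul]
  gcongr
  · refine le_trans ?_ (hH hmn.le)
    rw [← sum_range_reflect]
    refine sum_le_sum fun j hj => ?_
    rw [mem_range] at hj
    rw [Nat.cast_sub (by omega), Nat.cast_sub (by omega), Nat.cast_one, show (m : ℝ) - 1 - j - m = -(j + 1) by ring, abs_neg,
      abs_of_nonneg (by positivity)]
    exact inv_anti₀ (by positivity) (by linarith)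
  · refine le_of_eq_of_le ?_ (hH (n.sub_le m))
    rw [sum_Ico_eq_sum_range]
    push_cast
    refine sum_congr rfl fun j _ => ?_
    rw [add_sub_cancel_left, abs_of_nonneg j.cast_nonneg, add_comm]

lemma sum_range_inv_one_add_log_rpow_mul_one_add_abs_sub_le {m n : ℕ} (hmn : m < n) {p : ℝ}
    (hp : 1 ≤ p) : ∑ k ∈ range n, ((1 + log n) ^ p * (1 + |(k : ℝ) - m|))⁻¹ ≤ 2 := by
  have hlog : 1 ≤ 1 + log n := by have := log_natCast_nonneg n; linarith
  have hL : 1 + log n ≤ (1 + log n) ^ p := by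
    simpa using rpow_le_rpow_of_exponent_le hlog hp
  simp_rw [mul_inv, ← mul_sum]
  calc ((1 + log n) ^ p)⁻¹ * ∑ k ∈ range n, (1 + |(k : ℝ) - m|)⁻¹
      ≤ (1 + log n)⁻¹ * (2 * (1 + log n)) := by
        gcongr
        exact sum_range_inv_one_add_abs_sub_le hmn
    _ = 2 := by field_simp

lemma rpow_div_le_add_abs_sub_div {a b s : ℝ} (ha : 0 < a) (hb : 0 < b)
    (hs : s ∈ Set.Icc (-1) 0) :
    (a / b) ^ s ≤ (a + |a - b|) / a := by
  rw [le_div_iff₀ ha]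
  rcases le_total b a with hba | hab
  · have : (a / b) ^ s ≤ 1 := rpow_le_one_of_one_le_of_nonpos ((one_le_div hb).mpr hba) hs.2
    nlinarith [abs_nonneg (a - b)]
  · calc (a / b) ^ s * a ≤ (a / b) ^ (-1 : ℝ) * a := by
          gcongr ?_ * a
          exact rpow_le_rpow_of_exponent_ge (by positivity) (div_le_one_of_le₀ hab hb.le) hs.1
      _ = b := by rw [rpow_neg_one, inv_div, div_mul_cancel₀ _ ha.ne']
      _ ≤ a + |a - b| := by rw [abs_sub_comm]; linarith [le_abs_self (b - a)]

lemma one_add_log_le_two_mul_one_add_log {a b : ℝ} (ha : 1 ≤ a) (hb : 0 < b)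
    (hba : b ≤ 2 * a) :
    1 + log b ≤ 2 * (1 + log a) := by
  have h2a : log b ≤ log 2 + log a := by
    rw [← log_mul two_ne_zero (by positivity)]
    exact log_le_log hb hba
  linarith [log_nonneg ha, log_two_lt_d9]

lemma inv_one_add_log_rpow_mul_one_add_abs_sub_le {a b p : ℝ} (ha : 1 ≤ a) (hb : 1 ≤ b)
    (hp : 0 ≤ p) :
    ((1 + log a) ^ p * (1 + |a - b|))⁻¹ ≤
      2 * (a * (1 + log a) ^ p)⁻¹ +
        if a < 2 * b then 2 ^ p * ((1 + log b) ^ p * (1 + |a - b|))⁻¹ else 0 := by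
  have hloga := log_nonneg ha
  have hlogb := log_nonneg hb
  by_cases hmid : b ≤ 2 * a ∧ a < 2 * b
  · have hLb : (1 + log b) ^ p ≤ 2 ^ p * (1 + log a) ^ p := by
      rw [← mul_rpow zero_le_two (by linarith)]
      gcongr
      exact one_add_log_le_two_mul_one_add_log ha (by linarith) hmid.1
    calc ((1 + log a) ^ p * (1 + |a - b|))⁻¹
        ≤ 2 ^ p * ((1 + log b) ^ p * (1 + |a - b|))⁻¹ := by
          rw [← div_eq_mul_inv, le_div_iff₀ (by positivity), ← div_eq_inv_mul,
            div_le_iff₀ (by positivity)]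
          nlinarith [abs_nonneg (a - b)]
      _ ≤ _ := by rw [if_pos hmid.2]; exact le_add_of_nonneg_left (by positivity)
  · have hfar : a ≤ 2 * (1 + |a - b|) := by
      rw [not_and_or, not_le, not_lt] at hmid
      rcases hmid with h | h
      · linarith [neg_abs_le (a - b)]
      · linarith [le_abs_self (a - b)]
    calc ((1 + log a) ^ p * (1 + |a - b|))⁻¹ ≤ (a * (1 + log a) ^ p / 2)⁻¹ := by
          gcongr
          rw [div_le_iff₀ two_pos, mul_comm, mul_assoc]
          gcongr
          linarith
      _ = 2 * (a * (1 + log a) ^ p)⁻¹ := by rw [inv_div, div_eq_inv_mul, mul_comm]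
      _ ≤ _ := le_add_of_nonneg_right (by positivity)

lemma rpow_div_div_le_inv_add_ite {a b s p : ℝ} (ha : 1 ≤ a) (hb : 1 ≤ b)
    (hs : s ∈ Set.Icc (-1) 0) (hp : 0 ≤ p) :
    (a / b) ^ s / ((1 + log a) ^ p * (1 + |a - b|)) ≤
      3 * (a * (1 + log a) ^ p)⁻¹ +
        if a < 2 * b then 2 ^ p * ((1 + log b) ^ p * (1 + |a - b|))⁻¹ else 0 := by
  have hLa : 0 < (1 + log a) ^ p := by have := log_nonneg ha; positivity
  have hX := abs_nonneg (a - b)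
  calc (a / b) ^ s / ((1 + log a) ^ p * (1 + |a - b|))
      ≤ (a + |a - b|) / a / ((1 + log a) ^ p * (1 + |a - b|)) := by
        gcongr
        exact rpow_div_le_add_abs_sub_div (by positivity) (by positivity) hs
    _ = ((1 + log a) ^ p * (1 + |a - b|))⁻¹ +
          |a - b| / (1 + |a - b|) * (a * (1 + log a) ^ p)⁻¹ := by
        field_simp
    _ ≤ ((1 + log a) ^ p * (1 + |a - b|))⁻¹ + 1 * (a * (1 + log a) ^ p)⁻¹ := by
        gcongr
        rw [div_le_one (by positivity)]
        linarith
    _ ≤ _ := by linarith [inv_one_add_log_rpow_mul_one_add_abs_sub_le ha hb hp]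

lemma rpow_div_div_le_inv_add_ite_nat {d : ℕ} (hd : 1 ≤ d) {p s : ℝ} (hp : 0 ≤ p)
    (hs : s ∈ Set.Icc (-1) 0) (m k : ℕ) :
    (((d : ℝ) + 2 * k) / ((d : ℝ) + 2 * m)) ^ s /
        ((1 + log ((d : ℝ) + 2 * k)) ^ p * (1 + |((d : ℝ) + 2 * k) - ((d : ℝ) + 2 * m)|)) ≤
      3 * (((d : ℝ) + 2 * k) * (1 + log ((d : ℝ) + 2 * k)) ^ p)⁻¹ +
        if k ∈ range (d + 2 * m) then
          2 ^ p * ((1 + log ((d + 2 * m : ℕ) : ℝ)) ^ p * (1 + |(k : ℝ) - m|))⁻¹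
        else 0 := by
  have h1 (j : ℕ) : 1 ≤ (d : ℝ) + 2 * j := by
    have : (1 : ℝ) ≤ d := by exact_mod_cast hd
    linarith [j.cast_nonneg (α := ℝ)]
  refine (rpow_div_div_le_inv_add_ite (h1 k) (h1 m) hs hp).trans (add_le_add_right ?_ _)
  have hlog := log_natCast_nonneg (d + 2 * m)
  split_ifs with hlt hk
  · have hdist : |(d : ℝ) + 2 * k - (d + 2 * m)| = 2 * |(k : ℝ) - m| := by
      rw [show (d : ℝ) + 2 * k - (d + 2 * m) = 2 * (k - m) by ring, abs_mul, abs_two]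
    push_cast at hlog ⊢
    rw [hdist]
    gcongr _ * (_ * (1 + ?_))⁻¹
    linarith [abs_nonneg ((k : ℝ) - m)]
  · refine absurd (mem_range.mpr ?_) hk
    have : (k : ℝ) < d + 2 * m := by linarith [h1 m]
    exact_mod_cast this
  · positivity
  · exact le_rfl

theorem stmt12 (d : ℕ) (hd : 1 ≤ d) (β : ℝ) (hβ : 1 / 2 < β) :
    ∃ C > 0, ∀ s ∈ Set.Ico (-1 : ℝ) 0, ∀ kb : ℕ,
      Summable (fun k : ℕ =>
        (((d : ℝ) + 2 * k) / ((d : ℝ) + 2 * kb)) ^ s /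
          ((1 + Real.log ((d : ℝ) + 2 * k)) ^ (2 * β) *
            (1 + |((d : ℝ) + 2 * k) - ((d : ℝ) + 2 * kb)|))) ∧
      ∑' k : ℕ, (((d : ℝ) + 2 * k) / ((d : ℝ) + 2 * kb)) ^ s /
          ((1 + Real.log ((d : ℝ) + 2 * k)) ^ (2 * β) *
            (1 + |((d : ℝ) + 2 * k) - ((d : ℝ) + 2 * kb)|)) ≤ C := by
  have hp : 1 < 2 * β := by linarith
  have ha (k : ℕ) : (k : ℝ) + 1 ≤ d + 2 * k := by
    have : (1 : ℝ) ≤ d := by exact_mod_cast hd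
    linarith [k.cast_nonneg (α := ℝ)]
  have hlog (k : ℕ) : 0 ≤ log ((d : ℝ) + 2 * k) :=
    log_nonneg (by linarith [ha k, k.cast_nonneg (α := ℝ)])
  have hV0 (k : ℕ) :
      0 ≤ (((d : ℝ) + 2 * k) * (1 + log ((d : ℝ) + 2 * k)) ^ (2 * β))⁻¹ := by
    have := hlog k
    positivity
  refine ⟨3 * ∑' k : ℕ, (((d : ℝ) + 2 * k) * (1 + log ((d : ℝ) + 2 * k)) ^ (2 * β))⁻¹
    + 2 ^ (2 * β) * 2, add_pos_of_nonneg_of_pos (mul_nonneg zero_le_three (tsum_nonneg hV0))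
    (by positivity), fun s hs kb => ?_⟩
  obtain ⟨hsum, hle⟩ := summable_and_tsum_le_of_le_add_ite
    (fun k => by have := hlog k; positivity)
    ((summable_inv_mul_one_add_log_rpow_of_le ha hp).mul_left 3)
    (rpow_div_div_le_inv_add_ite_nat hd (by linarith) ⟨hs.1, hs.2.le⟩ kb)
  refine ⟨hsum, hle.trans ?_⟩
  rw [tsum_mul_left, ← mul_sum]
  gcongr
  exact sum_range_inv_one_add_log_rpow_mul_one_add_abs_sub_le (by omega) hp.le
end

section
/- For every δ > 1 there exists a positive constant C, depending only on δ, such that for every integer j ≥ 1, Σ_{l=1}^∞ 1/((1 + ln l)^δ (1 + |l − j|)) ≤ C. -/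
open Real Finset

private lemma aux_base_ge_one (x : ℝ) (hx : 0 ≤ Real.log x) : (1:ℝ) ≤ 1 + Real.log x := by
  linarith

/-- Summability of the Bertrand-type series `∑ 1/(n (1+log n)^δ)` for `δ > 1`. -/
private lemma bertrand_summable (δ : ℝ) (hδ : 1 < δ) :
    Summable (fun n : ℕ => 1 / ((n:ℝ) * (1 + Real.log n) ^ δ)) := by
  set f : ℕ → ℝ := fun n => 1 / ((n:ℝ) * (1 + Real.log n) ^ δ) with hf
  have hδ0 : (0:ℝ) ≤ δ := by linarith
  have hbase : ∀ n : ℕ, (1:ℝ) ≤ 1 + Real.log n := fun n =>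
    aux_base_ge_one _ (Real.log_natCast_nonneg n)
  have hP1 : ∀ n : ℕ, (1:ℝ) ≤ (1 + Real.log n) ^ δ := fun n =>
    Real.one_le_rpow (hbase n) hδ0
  have hnonneg : ∀ n, 0 ≤ f n := by
    intro n
    apply div_nonneg (by norm_num)
    exact mul_nonneg (Nat.cast_nonneg n) (le_trans zero_le_one (hP1 n))
  have hmono : ∀ ⦃m n : ℕ⦄, 0 < m → m ≤ n → f n ≤ f m := by
    intro m n hm hmn
    apply one_div_le_one_div_of_le
    · exact mul_pos (by exact_mod_cast hm) (lt_of_lt_of_le zero_lt_one (hP1 m))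
    · apply mul_le_mul
      · exact_mod_cast hmn
      · apply Real.rpow_le_rpow (le_trans zero_le_one (hbase m)) _ hδ0
        have : Real.log m ≤ Real.log n :=
          Real.log_le_log (by exact_mod_cast hm) (by exact_mod_cast hmn)
        linarith
      · exact le_trans zero_le_one (hP1 m)
      · exact Nat.cast_nonneg n
  rw [← summable_condensed_iff_of_nonneg hnonneg hmono]
  have hlog2 : (0:ℝ) < Real.log 2 := Real.log_pos (by norm_num)
  have hcond : ∀ k : ℕ, (2:ℝ) ^ k * f (2 ^ k) = 1 / (1 + (k:ℝ) * Real.log 2) ^ δ := by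
    intro k
    have h2kpos : (0:ℝ) < (2:ℝ) ^ k := by positivity
    have hX : (0:ℝ) < (1 + (k:ℝ) * Real.log 2) ^ δ := by
      apply Real.rpow_pos_of_pos
      positivity
    simp only [hf]
    push_cast
    rw [Real.log_pow]
    push_cast
    field_simp
  apply Summable.congr _ (fun k => (hcond k).symm)
  -- compare with (log 2)⁻δ * 1/(k+1)^δ
  have hsum : Summable (fun k : ℕ => (1 / Real.log 2 ^ δ) * (1 / ((k:ℝ) + 1) ^ δ)) := by
    apply Summable.mul_left
    have := (Real.summable_one_div_nat_rpow (p := δ)).mpr hδ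
    have h := (summable_nat_add_iff 1).mpr this
    apply h.congr
    intro k
    push_cast
    ring_nf
  apply hsum.of_nonneg_of_le
  · intro k
    positivity
  · intro k
    have hk1 : Real.log 2 * ((k:ℝ) + 1) ≤ (1:ℝ) + (k:ℝ) * Real.log 2 := by
      have : Real.log 2 ≤ 1 := le_of_lt (lt_of_lt_of_le Real.log_two_lt_d9 (by norm_num))
      nlinarith [Nat.cast_nonneg (α := ℝ) k]
    have hpos : (0:ℝ) < Real.log 2 * ((k:ℝ) + 1) := by positivity
    rw [one_div, one_div, one_div, ← mul_inv,
      ← Real.mul_rpow (le_of_lt hlog2) (by positivity)]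
    apply inv_anti₀
    · exact Real.rpow_pos_of_pos hpos δ
    · exact Real.rpow_le_rpow (le_of_lt hpos) hk1 hδ0

/-- Harmonic sum bound. -/
private lemma harmonic_bound (n : ℕ) :
    ∑ i ∈ Finset.range n, (1:ℝ) / ((i:ℝ) + 1) ≤ 1 + Real.log n := by
  have h := harmonic_le_one_add_log n
  have heq : ((harmonic n : ℚ) : ℝ) = ∑ i ∈ Finset.range n, (1:ℝ) / ((i:ℝ) + 1) := by
    rw [harmonic]
    push_cast
    simp [one_div]
  linarith [heq ▸ h]

/-- Bound on the near-diagonal sum. -/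
private lemma near_sum_bound (j : ℕ) (hj : 1 ≤ j) :
    ∑ l ∈ Finset.range (2 * j), (1:ℝ) / (1 + |((l:ℝ) + 1) - (j:ℝ)|)
      ≤ 2 * (1 + Real.log j) := by
  rw [two_mul, Finset.sum_range_add]
  have h1 : ∑ l ∈ Finset.range j, (1:ℝ) / (1 + |((l:ℝ) + 1) - (j:ℝ)|)
      ≤ 1 + Real.log j := by
    have hre : ∀ l ∈ Finset.range j, (1:ℝ) / (1 + |((l:ℝ) + 1) - (j:ℝ)|)
        = (fun i : ℕ => (1:ℝ) / ((i:ℝ) + 1)) (j - 1 - l) := by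
      intro l hl
      rw [Finset.mem_range] at hl
      have hl1 : 1 + l ≤ j := by omega
      have hcast : ((j - 1 - l : ℕ) : ℝ) = (j:ℝ) - 1 - l := by
        rw [Nat.sub_sub, Nat.cast_sub hl1]
        push_cast
        ring
      have hlc : (l:ℝ) + 1 ≤ (j:ℝ) := by exact_mod_cast hl
      have habs : |((l:ℝ) + 1) - (j:ℝ)| = (j:ℝ) - ((l:ℝ) + 1) := by
        rw [abs_of_nonpos (by linarith)]
        ring
      simp only [hcast, habs]
      ring_nf
    rw [Finset.sum_congr rfl hre, Finset.sum_range_reflect (fun i : ℕ => (1:ℝ) / ((i:ℝ) + 1)) j]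
    exact harmonic_bound j
  have h2 : ∑ l ∈ Finset.range j, (1:ℝ) / (1 + |(((j + l : ℕ):ℝ) + 1) - (j:ℝ)|)
      ≤ 1 + Real.log j := by
    have hle : ∀ l ∈ Finset.range j, (1:ℝ) / (1 + |(((j + l : ℕ):ℝ) + 1) - (j:ℝ)|)
        ≤ (1:ℝ) / ((l:ℝ) + 1) := by
      intro l _
      have habs : |(((j + l : ℕ):ℝ) + 1) - (j:ℝ)| = (l:ℝ) + 1 := by
        have h0 : (((j + l : ℕ):ℝ) + 1) - (j:ℝ) = (l:ℝ) + 1 := by push_cast; ring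
        rw [h0, abs_of_nonneg (by positivity)]
      rw [habs]
      apply one_div_le_one_div_of_le (by positivity)
      linarith
    calc ∑ l ∈ Finset.range j, (1:ℝ) / (1 + |(((j + l : ℕ):ℝ) + 1) - (j:ℝ)|)
        ≤ ∑ l ∈ Finset.range j, (1:ℝ) / ((l:ℝ) + 1) := Finset.sum_le_sum hle
      _ ≤ 1 + Real.log j := harmonic_bound j
  linarith

theorem stmt13 (δ : ℝ) (hδ : 1 < δ) :
    ∃ C > 0, ∀ j : ℕ, 1 ≤ j →
      Summable (fun l : ℕ =>
        1 / ((1 + Real.log ((l : ℝ) + 1)) ^ δ * (1 + |((l : ℝ) + 1) - (j : ℝ)|))) ∧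
      ∑' l : ℕ, 1 / ((1 + Real.log ((l : ℝ) + 1)) ^ δ * (1 + |((l : ℝ) + 1) - (j : ℝ)|)) ≤ C := by
  have hδ0 : (0:ℝ) ≤ δ := by linarith
  set c : ℝ := 1 - Real.log 2 with hc_def
  have hlog2 : (0:ℝ) < Real.log 2 := Real.log_pos (by norm_num)
  have hlog2' : Real.log 2 < 1 := lt_of_lt_of_le Real.log_two_lt_d9 (by norm_num)
  have hc : 0 < c := by simp only [hc_def]; linarith
  -- the comparison series
  set g : ℕ → ℝ := fun l => 2 / (((l:ℝ) + 1) * (1 + Real.log ((l:ℝ) + 1)) ^ δ) with hg_def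
  have hbase : ∀ x : ℝ, 0 ≤ Real.log x → (1:ℝ) ≤ (1 + Real.log x) ^ δ := fun x hx =>
    Real.one_le_rpow (by linarith) hδ0
  have hlogn : ∀ l : ℕ, (0:ℝ) ≤ Real.log ((l:ℝ) + 1) := by
    intro l
    apply Real.log_nonneg
    have : (0:ℝ) ≤ (l:ℝ) := Nat.cast_nonneg l
    linarith
  have hP1 : ∀ l : ℕ, (1:ℝ) ≤ (1 + Real.log ((l:ℝ) + 1)) ^ δ := fun l => hbase _ (hlogn l)
  have hPpos : ∀ l : ℕ, (0:ℝ) < (1 + Real.log ((l:ℝ) + 1)) ^ δ := fun l =>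
    lt_of_lt_of_le zero_lt_one (hP1 l)
  have hg_sum : Summable g := by
    have h := (summable_nat_add_iff 1).mpr (bertrand_summable δ hδ)
    have h2 := h.mul_left 2
    apply h2.congr
    intro l
    simp only [hg_def]
    push_cast
    rw [mul_one_div]
  have hg_nonneg : ∀ l, 0 ≤ g l := by
    intro l
    apply div_nonneg (by norm_num)
    exact mul_nonneg (by positivity) (le_of_lt (hPpos l))
  -- set the constant
  have htg : 0 ≤ ∑' l, g l := tsum_nonneg hg_nonneg
  have hcδ : 0 < c ^ δ := Real.rpow_pos_of_pos hc δ
  have h2cδ : 0 < 2 / c ^ δ := div_pos two_pos hcδ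
  refine ⟨(∑' l, g l) + 2 / c ^ δ + 1, by linarith, ?_⟩
  intro j hj
  have hjR : (1:ℝ) ≤ (j:ℝ) := by exact_mod_cast hj
  have hlogj : (0:ℝ) ≤ Real.log j := Real.log_nonneg hjR
  set f : ℕ → ℝ := fun l =>
    1 / ((1 + Real.log ((l:ℝ) + 1)) ^ δ * (1 + |((l:ℝ) + 1) - (j:ℝ)|)) with hf_def
  set K : ℝ := 1 / (c * (1 + Real.log j)) ^ δ with hK_def
  have hKpos : 0 < K := by
    apply one_div_pos.mpr
    exact Real.rpow_pos_of_pos (mul_pos hc (by linarith)) δ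
  set h : ℕ → ℝ := fun l =>
    if l < 2 * j then K * (1 / (1 + |((l:ℝ) + 1) - (j:ℝ)|)) else 0 with hh_def
  have hh_nonneg : ∀ l, 0 ≤ h l := by
    intro l
    simp only [hh_def]
    split
    · apply mul_nonneg (le_of_lt hKpos)
      positivity
    · exact le_rfl
  have hQpos : ∀ l : ℕ, (0:ℝ) < 1 + |((l:ℝ) + 1) - (j:ℝ)| := by
    intro l; positivity
  have hf_nonneg : ∀ l, 0 ≤ f l := by
    intro l
    simp only [hf_def]
    exact div_nonneg (by norm_num) (mul_nonneg (hPpos l).le (hQpos l).le)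
  -- the key pointwise inequality
  have key : ∀ l, f l ≤ g l + h l := by
    intro l
    by_cases hcase : 2 * j ≤ l + 1 ∨ 2 * (l + 1) ≤ j
    · -- far regime : f l ≤ g l
      have hQ : ((l:ℝ) + 1) / 2 ≤ 1 + |((l:ℝ) + 1) - (j:ℝ)| := by
        rcases hcase with hcase | hcase
        · have h1 : (2:ℝ) * (j:ℝ) ≤ (l:ℝ) + 1 := by exact_mod_cast hcase
          have habs : |((l:ℝ) + 1) - (j:ℝ)| = ((l:ℝ) + 1) - (j:ℝ) :=
            abs_of_nonneg (by linarith)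
          rw [habs]; linarith
        · have h1 : (2:ℝ) * ((l:ℝ) + 1) ≤ (j:ℝ) := by exact_mod_cast hcase
          have habs : |((l:ℝ) + 1) - (j:ℝ)| = (j:ℝ) - ((l:ℝ) + 1) := by
            rw [abs_of_nonpos (by linarith)]; ring
          rw [habs]
          have hl0 : (0:ℝ) ≤ (l:ℝ) := Nat.cast_nonneg l
          linarith
      have hfg : f l ≤ g l := by
        have hP := hPpos l
        have hQp := hQpos l
        simp only [hf_def, hg_def]
        rw [div_le_div_iff₀ (mul_pos hP hQp)
          (mul_pos (by positivity : (0:ℝ) < (l:ℝ) + 1) hP)]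
        nlinarith [mul_le_mul_of_nonneg_right hQ (le_of_lt hP)]
      exact le_trans hfg (le_add_of_nonneg_right (hh_nonneg l))
    · -- near regime : f l ≤ h l
      push_neg at hcase
      obtain ⟨h1, h2⟩ := hcase
      have hl2j : l < 2 * j := by omega
      have hnear : c * (1 + Real.log j) ≤ 1 + Real.log ((l:ℝ) + 1) := by
        have hj2 : (j:ℝ) < 2 * ((l:ℝ) + 1) := by exact_mod_cast h2
        have hjpos : (0:ℝ) < (j:ℝ) := by linarith
        have hlog : Real.log ((j:ℝ) / 2) ≤ Real.log ((l:ℝ) + 1) :=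
          Real.log_le_log (by positivity) (by linarith)
        rw [Real.log_div (ne_of_gt hjpos) (by norm_num)] at hlog
        have hprod : (0:ℝ) ≤ Real.log 2 * Real.log j :=
          mul_nonneg (le_of_lt hlog2) hlogj
        simp only [hc_def]
        nlinarith
      have hM : (0:ℝ) < c * (1 + Real.log j) := mul_pos hc (by linarith)
      have hMP : (c * (1 + Real.log j)) ^ δ ≤ (1 + Real.log ((l:ℝ) + 1)) ^ δ :=
        Real.rpow_le_rpow (le_of_lt hM) hnear hδ0
      have hMδpos : (0:ℝ) < (c * (1 + Real.log j)) ^ δ := Real.rpow_pos_of_pos hM δ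
      have hfh : f l ≤ h l := by
        simp only [hf_def, hh_def, if_pos hl2j, hK_def]
        rw [one_div_mul_one_div]
        apply one_div_le_one_div_of_le (mul_pos hMδpos (hQpos l))
        exact mul_le_mul_of_nonneg_right hMP (hQpos l).le
      exact le_trans hfh (le_add_of_nonneg_left (hg_nonneg l))
  -- summability
  have hh_zero : ∀ l ∉ Finset.range (2 * j), h l = 0 := by
    intro l hl
    rw [Finset.mem_range] at hl
    simp only [hh_def, if_neg hl]
  have hh_sum : Summable h := summable_of_ne_finset_zero hh_zero
  have hgh_sum : Summable (fun l => g l + h l) := hg_sum.add hh_sum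
  have hf_sum : Summable f := hgh_sum.of_nonneg_of_le hf_nonneg key
  refine ⟨hf_sum, ?_⟩
  have hts : ∑' l, f l ≤ ∑' l, (g l + h l) := Summable.tsum_le_tsum key hf_sum hgh_sum
  rw [Summable.tsum_add hg_sum hh_sum] at hts
  have hth : ∑' l, h l ≤ 2 / c ^ δ := by
    rw [tsum_eq_sum hh_zero]
    have hsplit : ∑ l ∈ Finset.range (2 * j), h l
        = K * ∑ l ∈ Finset.range (2 * j), (1:ℝ) / (1 + |((l:ℝ) + 1) - (j:ℝ)|) := by
      rw [Finset.mul_sum]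
      apply Finset.sum_congr rfl
      intro l hl
      rw [Finset.mem_range] at hl
      simp only [hh_def, if_pos hl]
    rw [hsplit]
    have hns := near_sum_bound j hj
    have hstep : K * ∑ l ∈ Finset.range (2 * j), (1:ℝ) / (1 + |((l:ℝ) + 1) - (j:ℝ)|)
        ≤ K * (2 * (1 + Real.log j)) :=
      mul_le_mul_of_nonneg_left hns hKpos.le
    refine hstep.trans ?_
    have hL1 : (1:ℝ) ≤ 1 + Real.log j := by linarith
    have hLδ : 1 + Real.log j ≤ (1 + Real.log j) ^ δ := by
      nth_rewrite 1 [← Real.rpow_one (1 + Real.log j)]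
      exact Real.rpow_le_rpow_of_exponent_le hL1 (le_of_lt hδ)
    have hLpos : (0:ℝ) < (1 + Real.log j) ^ δ := Real.rpow_pos_of_pos (by linarith) δ
    rw [hK_def, Real.mul_rpow (le_of_lt hc) (by linarith), one_div_mul_eq_div]
    rw [div_le_div_iff₀ (mul_pos hcδ hLpos) hcδ]
    have hmul : 2 * c ^ δ * (1 + Real.log j) ≤ 2 * c ^ δ * (1 + Real.log j) ^ δ :=
      mul_le_mul_of_nonneg_left hLδ (by nlinarith)
    nlinarith
  linarith
end
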